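/- Let B be an n×n real symmetric positive definite matrix with simple eigenvalues and let μ_i > μ_{i+1} > 0 be two consecutive eigenvalues with orthonormal eigenvectors x_i, x_{i+1}. Fix κ ∈ (μ_{i+1}, μ_i), γ ∈ (0,1), and let L(κ) = {x ≠ 0 : μ(x) = κ}. Then for every x ∈ L(κ) and every x* ∈ L(κ) ∩ span{x_i, x_{i+1}} one has: (i) ‖Bx* − κx*‖/‖x*‖ ≤ ‖Bx − κx‖/‖x‖, and (ii) φ_1(x*) − φ_γ(x*) ≤ φ_1(x) − φ_γ(x). That is, both the normalized gradient norm ‖∇μ(x)‖·‖x‖ = 2‖Bx − κx‖/‖x‖ and the angle difference φ_1(x) − φ_γ(x) attain their minima over L(κ) at points of span{x_i, x_{i+1}}. -/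

import Mathlib

/-!
Expand `y` in the orthonormal eigenbasis, `y = ∑ cₖ xₖ`. On the level set `∑ (μₖ - κ) cₖ² = 0`,
so the identity `(t - κ)² = (μᵢ - κ)(κ - μᵢ₊₁) + (t - μᵢ)(t - μᵢ₊₁) + (μᵢ + μᵢ₊₁ - 2κ)(t - κ)`
gives `‖By - κy‖² = (μᵢ - κ)(κ - μᵢ₊₁)‖y‖² + ∑ (μₖ - μᵢ)(μₖ - μᵢ₊₁) cₖ²`. As no eigenvalue lies
strictly between `μᵢ₊₁` and `μᵢ`, every term of the last sum is nonnegative, and all of them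
vanish on `span {xᵢ, xᵢ₊₁}`: this is (i).

For (ii), `By - κy ⊥ y` on the level set, so with `r = ‖By - κy‖ / ‖y‖` the sine
`‖By - κy‖ / ‖By‖` equals `r / √(r² + κ²)`, which increases with `r`; and
`t ↦ arcsin t - arcsin (γ t)` increases on `[0, 1]` for `0 ≤ γ ≤ 1`.
-/

noncomputable section

/-- Real matrix-vector multiplication viewed as a map on `EuclideanSpace`. -/
def mulVecEr {n : ℕ} (M : Matrix (Fin n) (Fin n) ℝ) (x : EuclideanSpace ℝ (Fin n)) :
    EuclideanSpace ℝ (Fin n) :=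
  (WithLp.equiv 2 (Fin n → ℝ)).symm (M.mulVec (WithLp.equiv 2 (Fin n → ℝ) x))

/-- The Rayleigh quotient `μ(x) = (x,Bx)/(x,x)`. -/
def RQr {n : ℕ} (B : Matrix (Fin n) (Fin n) ℝ) (x : EuclideanSpace ℝ (Fin n)) : ℝ :=
  (inner ℝ x (mulVecEr B x) : ℝ) / ‖x‖ ^ 2

/-- The opening angle `φ_γ(x) = arcsin(γ ‖Bx - μ(x)x‖ / ‖Bx‖)`. -/
def oangleR {n : ℕ} (B : Matrix (Fin n) (Fin n) ℝ) (γ : ℝ)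
    (x : EuclideanSpace ℝ (Fin n)) : ℝ :=
  Real.arcsin (γ * ‖mulVecEr B x - RQr B x • x‖ / ‖mulVecEr B x‖)

open Real
open scoped RealInnerProductSpace

lemma sum_sq_sub_mul_eq {ι : Type*} (s : Finset ι) (μ w : ι → ℝ) (a c : ℝ) {κ : ℝ}
    (hmean : ∑ k ∈ s, (μ k - κ) * w k = 0) :
    ∑ k ∈ s, (μ k - κ) ^ 2 * w k =
      (a - κ) * (κ - c) * ∑ k ∈ s, w k + ∑ k ∈ s, (μ k - a) * (μ k - c) * w k := by
  have hterm : ∀ k ∈ s, (μ k - κ) ^ 2 * w k = (a - κ) * (κ - c) * w k +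
      (μ k - a) * (μ k - c) * w k + (a + c - 2 * κ) * ((μ k - κ) * w k) :=
    fun k _ => by ring
  rw [Finset.sum_congr rfl hterm, Finset.sum_add_distrib, Finset.sum_add_distrib,
    ← Finset.mul_sum, ← Finset.mul_sum, hmean, mul_zero, add_zero]

lemma Antitone.sub_mul_sub_succ_nonneg {n : ℕ} {f : Fin n → ℝ} (hf : Antitone f) (i : Fin n)
    (hi : (i : ℕ) + 1 < n) (k : Fin n) : 0 ≤ (f k - f i) * (f k - f ⟨(i : ℕ) + 1, hi⟩) := by
  rcases le_or_gt k i with hki | hik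
  · have hk_succ : k ≤ Fin.mk ((i : ℕ) + 1) hi := Fin.le_def.2 (Nat.le_succ_of_le hki)
    exact mul_nonneg (sub_nonneg.2 (hf hki)) (sub_nonneg.2 (hf hk_succ))
  · have hsucc_k : Fin.mk ((i : ℕ) + 1) hi ≤ k := Fin.le_def.2 hik
    exact mul_nonneg_of_nonpos_of_nonpos (sub_nonpos.2 (hf hik.le)) (sub_nonpos.2 (hf hsucc_k))

lemma monotoneOn_arcsin_sub_arcsin_mul {γ : ℝ} (hγ0 : 0 ≤ γ) (hγ1 : γ ≤ 1) :
    MonotoneOn (fun t => arcsin t - arcsin (γ * t)) (Set.Icc 0 1) := by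
  have hderiv : ∀ t ∈ Set.Ioo (0 : ℝ) 1, HasDerivAt (fun t => arcsin t - arcsin (γ * t))
      (1 / √(1 - t ^ 2) - 1 / √(1 - (γ * t) ^ 2) * γ) t := by
    rintro t ⟨ht0, ht1⟩
    have hγt : γ * t < 1 := by nlinarith
    refine (hasDerivAt_arcsin (by linarith) ht1.ne).sub ?_
    exact (hasDerivAt_arcsin (by nlinarith) hγt.ne).comp t ((hasDerivAt_id t).const_mul γ)
      |>.congr_deriv (by simp)
  refine monotoneOn_of_hasDerivWithinAt_nonneg (convex_Icc 0 1)
    (continuous_arcsin.sub (continuous_arcsin.comp (continuous_const_mul γ))).continuousOn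
    (fun t ht => (hderiv t (by simpa using ht)).hasDerivWithinAt) fun t ht => ?_
  rw [interior_Icc] at ht
  obtain ⟨ht0, ht1⟩ := ht
  have hsqrt : √(1 - t ^ 2) ≤ √(1 - (γ * t) ^ 2) :=
    sqrt_le_sqrt (by nlinarith [mul_le_of_le_one_left hγ0 hγ1])
  rw [sub_nonneg, div_mul_eq_mul_div, one_mul]
  exact div_le_div₀ zero_le_one hγ1 (sqrt_pos.2 (by nlinarith)) hsqrt

lemma monotoneOn_div_sqrt_sq_add_sq (c : ℝ) :
    MonotoneOn (fun r => r / √(r ^ 2 + c ^ 2)) (Set.Ici 0) := by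
  intro r hr r' hr' hrr'
  obtain rfl | hr_pos := (Set.mem_Ici.1 hr).eq_or_lt
  · simpa using div_nonneg hr' (sqrt_nonneg _)
  have hr'_pos : 0 < r' := hr_pos.trans_le hrr'
  simp only
  rw [div_le_div_iff₀ (by positivity) (by positivity)]
  refine (pow_le_pow_iff_left₀ (by positivity) (by positivity) two_ne_zero).1 ?_
  rw [mul_pow, mul_pow, sq_sqrt (by positivity), sq_sqrt (by positivity)]
  nlinarith [mul_le_mul_of_nonneg_right (pow_le_pow_left₀ hr_pos.le hrr' 2) (sq_nonneg c)]

section Residual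

variable {E : Type*} [NormedAddCommGroup E] [InnerProductSpace ℝ E]

lemma norm_sq_eq_norm_sub_smul_sq_add {x v : E} {κ : ℝ} (h : ⟪x, v⟫ = κ * ‖x‖ ^ 2) :
    ‖v‖ ^ 2 = ‖v - κ • x‖ ^ 2 + κ ^ 2 * ‖x‖ ^ 2 := by
  have horth : ⟪v - κ • x, κ • x⟫ = 0 := by
    rw [inner_sub_left, real_inner_smul_right, real_inner_smul_right, real_inner_smul_left,
      real_inner_self_eq_norm_sq, real_inner_comm, h]
    ring
  have hsplit := norm_add_pow_two_real (v - κ • x) (κ • x)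
  rw [sub_add_cancel, horth, norm_smul, mul_pow, norm_eq_abs, sq_abs] at hsplit
  linarith

lemma norm_sub_smul_div_norm_le_one {x v : E} {κ : ℝ} (h : ⟪x, v⟫ = κ * ‖x‖ ^ 2) :
    ‖v - κ • x‖ / ‖v‖ ≤ 1 := by
  refine div_le_one_of_le₀ ?_ (norm_nonneg _)
  refine (pow_le_pow_iff_left₀ (norm_nonneg _) (norm_nonneg _) two_ne_zero).1 ?_
  rw [norm_sq_eq_norm_sub_smul_sq_add h]
  nlinarith [sq_nonneg κ, sq_nonneg ‖x‖]

lemma norm_sub_smul_div_norm_eq {x v : E} {κ : ℝ} (hx : x ≠ 0) (h : ⟪x, v⟫ = κ * ‖x‖ ^ 2) :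
    ‖v - κ • x‖ / ‖v‖ =
      ‖v - κ • x‖ / ‖x‖ / √((‖v - κ • x‖ / ‖x‖) ^ 2 + κ ^ 2) := by
  have hx' : 0 < ‖x‖ := norm_pos_iff.2 hx
  have hv : ‖v‖ = ‖x‖ * √((‖v - κ • x‖ / ‖x‖) ^ 2 + κ ^ 2) := calc
    ‖v‖ = √(‖x‖ ^ 2 * ((‖v - κ • x‖ / ‖x‖) ^ 2 + κ ^ 2)) := by
      rw [← sqrt_sq (norm_nonneg v), norm_sq_eq_norm_sub_smul_sq_add h]
      field_simp
    _ = ‖x‖ * √((‖v - κ • x‖ / ‖x‖) ^ 2 + κ ^ 2) := by rw [sqrt_mul (sq_nonneg _), sqrt_sq hx'.le]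
  rw [hv, div_mul_eq_div_div]

lemma norm_sub_smul_div_norm_le_of_div_norm_le {x x' v v' : E} {κ : ℝ} (hx : x ≠ 0)
    (hx' : x' ≠ 0) (h : ⟪x, v⟫ = κ * ‖x‖ ^ 2) (h' : ⟪x', v'⟫ = κ * ‖x'‖ ^ 2)
    (hle : ‖v' - κ • x'‖ / ‖x'‖ ≤ ‖v - κ • x‖ / ‖x‖) :
    ‖v' - κ • x'‖ / ‖v'‖ ≤ ‖v - κ • x‖ / ‖v‖ := by
  rw [norm_sub_smul_div_norm_eq hx h, norm_sub_smul_div_norm_eq hx' h']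
  exact monotoneOn_div_sqrt_sq_add_sq κ (Set.mem_Ici.2 (by positivity))
    (Set.mem_Ici.2 (by positivity)) hle

end Residual

section Eigenbasis

variable {ι E : Type*} [Fintype ι] [NormedAddCommGroup E] [InnerProductSpace ℝ E]
  {T : E →ₗ[ℝ] E} {b : OrthonormalBasis ι ℝ E} {μ : ι → ℝ}

lemma OrthonormalBasis.inner_apply_of_apply_eq_smul (heig : ∀ k, T (b k) = μ k • b k)
    (k : ι) (y : E) : ⟪b k, T y⟫ = μ k * ⟪b k, y⟫ := by
  classical
  conv_lhs => rw [← b.sum_repr' y]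
  simp [heig, inner_sum, inner_smul_right, b.inner_eq_ite, mul_comm]

lemma OrthonormalBasis.norm_apply_sub_smul_sq_eq (heig : ∀ k, T (b k) = μ k • b k) (a c : ℝ)
    {κ : ℝ} {y : E} (hy : ⟪y, T y⟫ = κ * ‖y‖ ^ 2) :
    ‖T y - κ • y‖ ^ 2 =
      (a - κ) * (κ - c) * ‖y‖ ^ 2 + ∑ k, (μ k - a) * (μ k - c) * ⟪b k, y⟫ ^ 2 := by
  have hcoord : ∀ k, ⟪b k, T y - κ • y⟫ = (μ k - κ) * ⟪b k, y⟫ := fun k => by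
    rw [inner_sub_right, real_inner_smul_right, b.inner_apply_of_apply_eq_smul heig]
    ring
  have hquad : ⟪y, T y⟫ = ∑ k, μ k * ⟪b k, y⟫ ^ 2 := by
    rw [← b.sum_inner_mul_inner]
    refine Finset.sum_congr rfl fun k _ => ?_
    rw [b.inner_apply_of_apply_eq_smul heig, real_inner_comm]
    ring
  have hmean : ∑ k, (μ k - κ) * ⟪b k, y⟫ ^ 2 = 0 := by
    simp only [sub_mul, Finset.sum_sub_distrib, ← Finset.mul_sum, b.sum_sq_inner_right, ← hquad,
      hy, sub_self]
  rw [← b.sum_sq_inner_right, ← b.sum_sq_inner_right y, ← sum_sq_sub_mul_eq _ _ _ a c hmean]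
  simp only [hcoord, mul_pow]

lemma OrthonormalBasis.sqrt_le_norm_apply_sub_smul_div_norm (heig : ∀ k, T (b k) = μ k • b k)
    {a c κ : ℝ} (hgap : ∀ k, 0 ≤ (μ k - a) * (μ k - c)) {x : E} (hx : x ≠ 0)
    (hxκ : ⟪x, T x⟫ = κ * ‖x‖ ^ 2) :
    √((a - κ) * (κ - c)) ≤ ‖T x - κ • x‖ / ‖x‖ := by
  rw [sqrt_le_left (by positivity), div_pow, le_div_iff₀ (by positivity),
    b.norm_apply_sub_smul_sq_eq heig a c hxκ]
  exact le_add_of_nonneg_right (Finset.sum_nonneg fun k _ => mul_nonneg (hgap k) (sq_nonneg _))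

lemma OrthonormalBasis.norm_apply_sub_smul_div_norm_eq_sqrt (heig : ∀ k, T (b k) = μ k • b k)
    {i j : ι} {κ : ℝ} {x : E} (hx : x ≠ 0) (hxκ : ⟪x, T x⟫ = κ * ‖x‖ ^ 2)
    (hmem : x ∈ Submodule.span ℝ {b i, b j}) :
    ‖T x - κ • x‖ / ‖x‖ = √((μ i - κ) * (κ - μ j)) := by
  have hoff : ∀ k, (μ k - μ i) * (μ k - μ j) * ⟪b k, x⟫ ^ 2 = 0 := fun k => by
    by_cases hki : k = i
    · simp [hki]
    by_cases hkj : k = j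
    · simp [hkj]
    obtain ⟨p, q, rfl⟩ := Submodule.mem_span_pair.1 hmem
    simp [inner_add_right, real_inner_smul_right, b.orthonormal.inner_eq_zero hki,
      b.orthonormal.inner_eq_zero hkj]
  have hsq : (‖T x - κ • x‖ / ‖x‖) ^ 2 = (μ i - κ) * (κ - μ j) := by
    rw [div_pow, div_eq_iff (by simpa using hx), b.norm_apply_sub_smul_sq_eq heig (μ i) (μ j) hxκ]
    simp [hoff]
  rw [← hsq, sqrt_sq (by positivity)]

end Eigenbasis

lemma inner_mulVecEr_self_eq_of_RQr_eq {n : ℕ} {B : Matrix (Fin n) (Fin n) ℝ}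
    {x : EuclideanSpace ℝ (Fin n)} {κ : ℝ} (h : RQr B x = κ) :
    ⟪x, mulVecEr B x⟫ = κ * ‖x‖ ^ 2 := by
  rcases eq_or_ne x 0 with rfl | hx
  · simp
  rw [← h, RQr, div_mul_cancel₀ _ (by simpa using hx)]

lemma oangleR_eq_of_RQr_eq {n : ℕ} {B : Matrix (Fin n) (Fin n) ℝ}
    {x : EuclideanSpace ℝ (Fin n)} {κ : ℝ} (h : RQr B x = κ) (γ : ℝ) :
    oangleR B γ x = arcsin (γ * (‖mulVecEr B x - κ • x‖ / ‖mulVecEr B x‖)) := by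
  rw [oangleR, h, mul_div_assoc]

theorem residual_and_angle_minimized_on_invariant_plane_general
    {n : ℕ} (B : Matrix (Fin n) (Fin n) ℝ)
    (μs : Fin n → ℝ) (hdec : StrictAnti μs)
    (xs : Fin n → EuclideanSpace ℝ (Fin n)) (hon : Orthonormal ℝ xs)
    (heig : ∀ k, mulVecEr B (xs k) = μs k • xs k)
    (i : Fin n) (hi : (i : ℕ) + 1 < n)
    (κ γ : ℝ)
    (hγ0 : 0 < γ) (hγ1 : γ < 1) :
    ∀ x xstar : EuclideanSpace ℝ (Fin n),
      x ≠ 0 → RQr B x = κ →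
      xstar ≠ 0 → RQr B xstar = κ →
      xstar ∈ Submodule.span ℝ {xs i, xs ⟨(i : ℕ) + 1, hi⟩} →
      ‖mulVecEr B xstar - κ • xstar‖ / ‖xstar‖ ≤ ‖mulVecEr B x - κ • x‖ / ‖x‖ ∧
      oangleR B 1 xstar - oangleR B γ xstar ≤ oangleR B 1 x - oangleR B γ x := by
  intro x xstar hx hxκ hxstar hxstarκ hmem
  let b := OrthonormalBasis.mk hon
    (hon.linearIndependent.span_eq_top_of_card_eq_finrank' (by simp)).ge
  have hb : ⇑b = xs := OrthonormalBasis.coe_mk _ _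
  rw [← hb] at heig hmem
  have heigT : ∀ k, Matrix.toEuclideanLin B (b k) = μs k • b k := heig
  have hx_level := inner_mulVecEr_self_eq_of_RQr_eq hxκ
  have hxstar_level := inner_mulVecEr_self_eq_of_RQr_eq hxstarκ
  have hplane := b.norm_apply_sub_smul_div_norm_eq_sqrt heigT hxstar hxstar_level hmem
  have hlower := b.sqrt_le_norm_apply_sub_smul_div_norm heigT
    (hdec.antitone.sub_mul_sub_succ_nonneg i hi) hx hx_level
  have hres : ‖mulVecEr B xstar - κ • xstar‖ / ‖xstar‖ ≤ ‖mulVecEr B x - κ • x‖ / ‖x‖ :=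
    hplane.trans_le hlower
  have hangle := norm_sub_smul_div_norm_le_of_div_norm_le hx hxstar hx_level hxstar_level hres
  have hangle_le_one := norm_sub_smul_div_norm_le_one hx_level
  refine ⟨hres, ?_⟩
  simp only [oangleR_eq_of_RQr_eq hxκ, oangleR_eq_of_RQr_eq hxstarκ, one_mul]
  exact monotoneOn_arcsin_sub_arcsin_mul hγ0.le hγ1.le ⟨by positivity, hangle.trans hangle_le_one⟩
    ⟨by positivity, hangle_le_one⟩ hangle

/-- On the level set `L(κ) = {x ≠ 0 : μ(x) = κ}` with `κ ∈ (μ_{i+1}, μ_i)`, both the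
normalized residual `‖Bx - κx‖/‖x‖` (proportional to `‖∇μ(x)‖‖x‖`) and the angle
difference `φ_1(x) - φ_γ(x)` attain their minima at points of `span{x_i, x_{i+1}}`. -/
theorem residual_and_angle_minimized_on_invariant_plane
    {n : ℕ} (B : Matrix (Fin n) (Fin n) ℝ) (hB : B.PosDef)
    (μs : Fin n → ℝ) (hdec : StrictAnti μs) (hpos : ∀ k, 0 < μs k)
    (xs : Fin n → EuclideanSpace ℝ (Fin n)) (hon : Orthonormal ℝ xs)
    (heig : ∀ k, mulVecEr B (xs k) = μs k • xs k)
    (i : Fin n) (hi : (i : ℕ) + 1 < n)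
    (κ γ : ℝ) (hκ : κ ∈ Set.Ioo (μs ⟨(i : ℕ) + 1, hi⟩) (μs i))
    (hγ0 : 0 < γ) (hγ1 : γ < 1) :
    ∀ x xstar : EuclideanSpace ℝ (Fin n),
      x ≠ 0 → RQr B x = κ →
      xstar ≠ 0 → RQr B xstar = κ →
      xstar ∈ Submodule.span ℝ {xs i, xs ⟨(i : ℕ) + 1, hi⟩} →
      ‖mulVecEr B xstar - κ • xstar‖ / ‖xstar‖ ≤ ‖mulVecEr B x - κ • x‖ / ‖x‖ ∧
      oangleR B 1 xstar - oangleR B γ xstar ≤ oangleR B 1 x - oangleR B γ x :=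
  residual_and_angle_minimized_on_invariant_plane_general B μs hdec xs hon heig i hi κ γ hγ0 hγ1
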